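/- Let E₁ : {0,1}^{n₁} × {0,1}^{d₁} → {0,1}^{m} be a (k₁, ε₁)-extractor and E₂ : {0,1}^{n₂} × {0,1}^{d} → {0,1}^{d₁} be a (k₂, ε₂)-extractor. Let (X₁, X₂) be a (k₁, k₂)-block source on {0,1}^{n₁} × {0,1}^{n₂} and let S be uniform on {0,1}^{d}, independent of (X₁, X₂). Then the distribution of E₁(X₁, E₂(X₂, S)) is (ε₁ + ε₂)-close in statistical distance to the uniform distribution on {0,1}^{m}. -/

import Mathlib

/-- `P` is a (finitely supported) probability distribution on the finite type `T`. -/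
def IsProb {T : Type*} [Fintype T] (P : T → ℝ) : Prop :=
  (∀ t, 0 ≤ P t) ∧ ∑ t, P t = 1

/-- Statistical (total variation) distance `(1/2)·Σ_t |P t − Q t|`. -/
noncomputable def statDist {T : Type*} [Fintype T] (P Q : T → ℝ) : ℝ :=
  (∑ t, |P t - Q t|) / 2

/-- `P` has min-entropy at least `k`: every point has probability at most `2^{−k}`. -/
noncomputable def MinEntropyGe {T : Type*} [Fintype T] (P : T → ℝ) (k : ℝ) : Prop :=
  ∀ t, P t ≤ (2 : ℝ) ^ (-k)

/-- The pushforward of `P` along `f`. -/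
noncomputable def pushf {A B : Type*} [Fintype A] [DecidableEq B] (P : A → ℝ) (f : A → B) :
    B → ℝ :=
  fun b => ∑ a, if f a = b then P a else 0

/-- `E : {0,1}^n × {0,1}^d → {0,1}^m` is a `(k, ε)`-extractor: for every `k`-source `X`
on `{0,1}^n`, the distribution `E(X, U_d)` is `ε`-close to uniform on `{0,1}^m`. -/
noncomputable def IsExtractor {n d m : ℕ} (k ε : ℝ)
    (E : (Fin n → Bool) → (Fin d → Bool) → (Fin m → Bool)) : Prop :=
  ∀ P : (Fin n → Bool) → ℝ, IsProb P → MinEntropyGe P k →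
    statDist
      (pushf (fun q : (Fin n → Bool) × (Fin d → Bool) =>
          P q.1 / (Fintype.card (Fin d → Bool) : ℝ))
        (fun q => E q.1 q.2))
      (fun _ => 1 / (Fintype.card (Fin m → Bool) : ℝ)) ≤ ε

/-- `(P₁, P₂)` jointly form a `(k₁, k₂)`-block source: the first marginal has min-entropy
at least `k₁`, and every conditional distribution of the second coordinate given a
first coordinate in the support has min-entropy at least `k₂`. -/
noncomputable def IsBlockSource {A B : Type*} [Fintype A] [Fintype B] (k₁ k₂ : ℝ)
    (P : A × B → ℝ) : Prop :=
  (∀ a, (∑ b, P (a, b)) ≤ (2 : ℝ) ^ (-k₁)) ∧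
  (∀ a, 0 < (∑ b, P (a, b)) → ∀ b, P (a, b) / (∑ b', P (a, b')) ≤ (2 : ℝ) ^ (-k₂))

/-!
Split the composed extraction at the intermediate pair `(X₁, E₂(X₂, S))`. Conditioned on
`X₁ = a`, the second source has min-entropy `k₂`, so `E₂` makes its seed `ε₂`-close to
uniform for each such `a`; averaging over `a`, the pair is `ε₂`-close to `X₁ ⊗ U_{d₁}`.
On the latter `E₁` is `ε₁`-close to uniform, and applying `E₁` does not increase
statistical distance.
-/

section StatDist

variable {A B C S : Type*} [Fintype A] [Fintype B] [Fintype S]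

lemma statDist_triangle (P Q R : A → ℝ) : statDist P R ≤ statDist P Q + statDist Q R := by
  unfold statDist
  rw [← add_div, div_le_div_iff_of_pos_right two_pos, ← Finset.sum_add_distrib]
  exact Finset.sum_le_sum fun t _ => abs_sub_le _ _ _

lemma statDist_pushf_le [DecidableEq B] (P Q : A → ℝ) (f : A → B) :
    statDist (pushf P f) (pushf Q f) ≤ statDist P Q := by
  unfold statDist pushf
  rw [div_le_div_iff_of_pos_right two_pos]
  calc ∑ b, |(∑ a, if f a = b then P a else 0) - ∑ a, if f a = b then Q a else 0|
      ≤ ∑ b, ∑ a, if f a = b then |P a - Q a| else 0 := by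
        refine Finset.sum_le_sum fun b _ => ?_
        rw [← Finset.sum_sub_distrib]
        refine (Finset.abs_sum_le_sum_abs _ _).trans (le_of_eq ?_)
        refine Finset.sum_congr rfl fun a _ => ?_
        split_ifs <;> simp
    _ = ∑ a, ∑ b, if f a = b then |P a - Q a| else 0 := Finset.sum_comm
    _ = ∑ a, |P a - Q a| := by simp

lemma pushf_pushf [DecidableEq B] [DecidableEq C] (P : A → ℝ) (f : A → B) (g : B → C) :
    pushf (pushf P f) g = pushf P (g ∘ f) := by
  funext c
  have hswap : ∀ b, (if g b = c then ∑ a, if f a = b then P a else 0 else 0)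
      = ∑ a, if f a = b then (if g b = c then P a else 0) else 0 := fun b => by
    split_ifs <;> simp
  simp only [pushf, Function.comp_apply, hswap]
  rw [Finset.sum_comm]
  refine Finset.sum_congr rfl fun a _ => ?_
  rw [Finset.sum_eq_single (f a) (fun b _ hb => by simp [Ne.symm hb]) (by simp)]
  simp

lemma statDist_fiberwise (μ : A → ℝ) (hμ : ∀ a, 0 ≤ μ a) (F G : A → B → ℝ) :
    statDist (fun p : A × B => μ p.1 * F p.1 p.2) (fun p => μ p.1 * G p.1 p.2)
      = ∑ a, μ a * statDist (F a) (G a) := by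
  simp only [statDist, Fintype.sum_prod_type, ← mul_sub, abs_mul, abs_of_nonneg (hμ _),
    ← Finset.mul_sum, mul_div_assoc, Finset.sum_div]

lemma statDist_fiberwise_le (μ : A → ℝ) (hμ : IsProb μ) (F G : A → B → ℝ) {ε : ℝ}
    (h : ∀ a, 0 < μ a → statDist (F a) (G a) ≤ ε) :
    statDist (fun p : A × B => μ p.1 * F p.1 p.2) (fun p => μ p.1 * G p.1 p.2) ≤ ε := by
  rw [statDist_fiberwise μ hμ.1]
  calc ∑ a, μ a * statDist (F a) (G a) ≤ ∑ a, μ a * ε := by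
        refine Finset.sum_le_sum fun a _ => ?_
        rcases (hμ.1 a).eq_or_lt with h0 | hpos
        · simp [← h0]
        · exact mul_le_mul_of_nonneg_left (h a hpos) hpos.le
    _ = ε := by rw [← Finset.sum_mul, hμ.2, one_mul]

end StatDist

section Seeded

variable {A B C S T : Type*} [Fintype A] [Fintype B] [Fintype S] [Fintype T] [DecidableEq C]

/-- The distribution of `E(X, U)` for `X ∼ P` and an independent uniform seed `U`. -/
noncomputable def seeded (P : T → ℝ) (E : T → S → C) : C → ℝ :=
  pushf (fun q : T × S => P q.1 / (Fintype.card S : ℝ)) (fun q => E q.1 q.2)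

noncomputable def uniformDist (C : Type*) [Fintype C] : C → ℝ :=
  fun _ => 1 / (Fintype.card C : ℝ)

lemma seeded_const_mul (r : ℝ) (P : T → ℝ) (E : T → S → C) :
    seeded (fun t => r * P t) E = fun c => r * seeded P E c := by
  funext c
  simp only [seeded, pushf, Finset.mul_sum, mul_ite, mul_zero, mul_div_assoc]

lemma seeded_pushf [DecidableEq B] (P : T → ℝ) (E : T → S → B) (g : B → C) :
    pushf (seeded P E) g = seeded P (fun t s => g (E t s)) :=
  pushf_pushf _ _ _

lemma seeded_fst_apply [DecidableEq A] (P : A × B → ℝ) (E : B → S → C) (a : A) (c : C) :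
    seeded P (fun x s => (x.1, E x.2 s)) (a, c) = seeded (fun b => P (a, b)) E c := by
  simp only [seeded, pushf, Fintype.sum_prod_type, Prod.mk.injEq, ite_and]
  rw [Finset.sum_eq_single a (fun a' _ ha' => by simp [ha']) (by simp)]
  simp

end Seeded

section Conditioning

variable {A B : Type*} [Fintype A] [Fintype B]

noncomputable def marginal (P : A × B → ℝ) (a : A) : ℝ :=
  ∑ b, P (a, b)

/-- Junk value `0` when `marginal P a = 0`. -/
noncomputable def condDist (P : A × B → ℝ) (a : A) (b : B) : ℝ :=
  P (a, b) / marginal P a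

lemma isProb_marginal {P : A × B → ℝ} (hP : IsProb P) : IsProb (marginal P) :=
  ⟨fun a => Finset.sum_nonneg fun b _ => hP.1 (a, b), by
    rw [← hP.2, Fintype.sum_prod_type]; rfl⟩

lemma isProb_condDist {P : A × B → ℝ} (hP : IsProb P) {a : A} (ha : 0 < marginal P a) :
    IsProb (condDist P a) :=
  ⟨fun b => div_nonneg (hP.1 (a, b)) ha.le, by
    simp only [condDist, ← Finset.sum_div]; exact div_self ha.ne'⟩

lemma marginal_mul_condDist {P : A × B → ℝ} (hP : IsProb P) (a : A) (b : B) :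
    marginal P a * condDist P a b = P (a, b) := by
  rcases ((isProb_marginal hP).1 a).eq_or_lt with h0 | hpos
  · have hzero := (Finset.sum_eq_zero_iff_of_nonneg fun b _ => hP.1 (a, b)).mp h0.symm b
      (Finset.mem_univ b)
    rw [← h0, zero_mul, hzero]
  · exact mul_div_cancel₀ _ hpos.ne'

end Conditioning

section Extractor

variable {n d m : ℕ} {A : Type*} [Fintype A] [DecidableEq A]

lemma IsExtractor.statDist_seeded_le {k ε : ℝ}
    {E : (Fin n → Bool) → (Fin d → Bool) → (Fin m → Bool)} (hE : IsExtractor k ε E)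
    {P : (Fin n → Bool) → ℝ} (hP : IsProb P) (hk : MinEntropyGe P k) :
    statDist (seeded P E) (uniformDist (Fin m → Bool)) ≤ ε :=
  hE P hP hk

lemma IsExtractor.statDist_seeded_fst_le {k₁ k₂ ε₂ : ℝ}
    {E₂ : (Fin n → Bool) → (Fin d → Bool) → (Fin m → Bool)} (hE₂ : IsExtractor k₂ ε₂ E₂)
    {P : A × (Fin n → Bool) → ℝ} (hP : IsProb P) (hblock : IsBlockSource k₁ k₂ P) :
    statDist (seeded P (fun x s => (x.1, E₂ x.2 s)))
      (fun q => marginal P q.1 * uniformDist (Fin m → Bool) q.2) ≤ ε₂ := by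
  have hfiber : seeded P (fun x s => (x.1, E₂ x.2 s))
      = fun q => marginal P q.1 * seeded (condDist P q.1) E₂ q.2 := by
    funext ⟨a, y⟩
    simp_rw [seeded_fst_apply, ← marginal_mul_condDist hP a, seeded_const_mul]
  rw [hfiber]
  refine statDist_fiberwise_le _ (isProb_marginal hP) (fun a => seeded (condDist P a) E₂)
    (fun _ => uniformDist _) fun a ha => ?_
  exact hE₂.statDist_seeded_le (isProb_condDist hP ha) (hblock.2 a ha)

end Extractor

/-- **block-source extraction.** If `E₁` is a `(k₁,ε₁)`-extractor,
`E₂` is a `(k₂,ε₂)`-extractor, and `(X₁,X₂)` is a `(k₁,k₂)`-block source (with `S`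
an independent uniform seed), then `E₁(X₁, E₂(X₂, S))` is `(ε₁+ε₂)`-close to uniform. -/
theorem stmt_16 {n₁ n₂ d₁ d m : ℕ} (k₁ k₂ ε₁ ε₂ : ℝ)
    (E₁ : (Fin n₁ → Bool) → (Fin d₁ → Bool) → (Fin m → Bool))
    (E₂ : (Fin n₂ → Bool) → (Fin d → Bool) → (Fin d₁ → Bool))
    (hE₁ : IsExtractor k₁ ε₁ E₁) (hE₂ : IsExtractor k₂ ε₂ E₂)
    (P : (Fin n₁ → Bool) × (Fin n₂ → Bool) → ℝ)
    (hP : IsProb P) (hblock : IsBlockSource k₁ k₂ P) :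
    statDist
      (pushf (fun q : ((Fin n₁ → Bool) × (Fin n₂ → Bool)) × (Fin d → Bool) =>
          P q.1 / (Fintype.card (Fin d → Bool) : ℝ))
        (fun q => E₁ q.1.1 (E₂ q.1.2 q.2)))
      (fun _ => 1 / (Fintype.card (Fin m → Bool) : ℝ)) ≤ ε₁ + ε₂ := by
  change statDist (seeded P fun x s => E₁ x.1 (E₂ x.2 s)) (uniformDist _) ≤ ε₁ + ε₂
  set Q := seeded P fun x s => (x.1, E₂ x.2 s)
  set Q' := fun q : (Fin n₁ → Bool) × (Fin d₁ → Bool) => marginal P q.1 * uniformDist _ q.2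
  have hQ : pushf Q (fun q => E₁ q.1 q.2) = seeded P fun x s => E₁ x.1 (E₂ x.2 s) :=
    seeded_pushf _ _ _
  have hQ' : pushf Q' (fun q => E₁ q.1 q.2) = seeded (marginal P) E₁ := by
    simp only [Q', uniformDist, mul_one_div]
    rfl
  rw [← hQ, add_comm]
  refine (statDist_triangle _ (pushf Q' fun q => E₁ q.1 q.2) _).trans (add_le_add ?_ ?_)
  · exact (statDist_pushf_le _ _ _).trans (hE₂.statDist_seeded_fst_le hP hblock)
  · rw [hQ']
    exact hE₁.statDist_seeded_le (isProb_marginal hP) hblock.1
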